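/- Assume that for every x ∈ X and u ∈ U, sup_{w ∈ W} l(x, u, w) ≥ 0, and that for every y ∈ Y the preimage h^{-1}{y} is a finite indexed set of at most M elements. Then for every horizon N ≥ 0 and every initial measurement y_0 ∈ Y, the optimal finite-horizon worst-case value over all causal strategies equals the (N+1)-st value-iteration function evaluated at the zero information state: inf_{π ∈ Π} J_π^N(y_0) = V_{N+1}(0, y_0). -/

import Mathlib

open scoped BigOperators

noncomputable section

variable {X U W Y : Type*}

/-- The worst-case history `ρ_t(x, y_{0:t-1}, u_{0:t-1})`: the supremum (in `ℝ ∪ {-∞}`,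
with `sSup ∅ = ⊥`) of accumulated stage costs over all disturbance sequences and initial
states whose trajectory reaches `x` at time `t` and is consistent with the measurements. -/
noncomputable def rho (f : X → U → W → X) (h : X → Y) (l : X → U → W → ℝ)
    (t : ℕ) (x : X) (ys : ℕ → Y) (us : ℕ → U) : EReal :=
  sSup { c : EReal | ∃ (xs : ℕ → X) (ws : ℕ → W),
    xs t = x ∧
    (∀ τ < t, xs (τ + 1) = f (xs τ) (us τ) (ws τ)) ∧
    (∀ τ < t, h (xs τ) = ys τ) ∧
    c = ((∑ τ ∈ Finset.range t, l (xs τ) (us τ) (ws τ) : ℝ) : EReal) }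

/-- Inputs generated causally by a strategy `π` from a measurement sequence:
`u_t = μ_t(y_{0:t}, u_{0:t-1})`. -/
noncomputable def inputsOf (π : ℕ → List Y → List U → U) (ys : ℕ → Y) : ℕ → U
  | t => π t ((List.range (t + 1)).map ys) (List.ofFn fun i : Fin t => inputsOf π ys i)
  decreasing_by exact i.isLt

/-- Closed loop: state, list of past measurements and list of past inputs. -/
noncomputable def loop (f : X → U → W → X) (h : X → Y)
    (π : ℕ → List Y → List U → U) (x0 : X) (ws : ℕ → W) : ℕ → X × List Y × List U
  | 0 => (x0, [h x0], [])
  | t + 1 =>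
    let p := loop f h π x0 ws t
    let u := π t p.2.1 p.2.2
    let x' := f p.1 u (ws t)
    (x', p.2.1 ++ [h x'], p.2.2 ++ [u])

/-- Closed-loop state `x_t`. -/
noncomputable def cstate (f : X → U → W → X) (h : X → Y)
    (π : ℕ → List Y → List U → U) (x0 : X) (ws : ℕ → W) (t : ℕ) : X :=
  (loop f h π x0 ws t).1

/-- Closed-loop input `u_t = μ_t(y_{0:t}, u_{0:t-1})`. -/
noncomputable def cinput (f : X → U → W → X) (h : X → Y)
    (π : ℕ → List Y → List U → U) (x0 : X) (ws : ℕ → W) (t : ℕ) : U :=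
  π t (loop f h π x0 ws t).2.1 (loop f h π x0 ws t).2.2

/-- The worst-case `N`-horizon performance `J_π^N(y_0)`. -/
noncomputable def Jcost (f : X → U → W → X) (h : X → Y) (l : X → U → W → ℝ)
    (π : ℕ → List Y → List U → U) (N : ℕ) (y0 : Y) : EReal :=
  sSup { c : EReal | ∃ (x0 : X) (ws : ℕ → W), h x0 = y0 ∧
    c = ((∑ t ∈ Finset.range (N + 1),
      l (cstate f h π x0 ws t) (cinput f h π x0 ws t) (ws t) : ℝ) : EReal) }

/-- The information-state update `g` (componentwise), for preimages of `h`
enumerated by `ξ : Y → Fin M → X`. -/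
noncomputable def gup {M : ℕ} (f : X → U → W → X) (l : X → U → W → ℝ)
    (ξ : Y → Fin M → X) (r : Fin M → EReal) (ynext y : Y) (u : U) : Fin M → EReal :=
  fun i => sSup { c : EReal | ∃ (j : Fin M) (w : W),
    ξ ynext i = f (ξ y j) u w ∧ c = (l (ξ y j) u w : EReal) + r j }

/-- The information state `r_t`, defined recursively by `r_0 = 0` and
`r_t = g(r_{t-1}, y_t, y_{t-1}, u_{t-1})`. -/
noncomputable def rvec {M : ℕ} (f : X → U → W → X) (l : X → U → W → ℝ)
    (ξ : Y → Fin M → X) (ys : ℕ → Y) (us : ℕ → U) : ℕ → Fin M → EReal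
  | 0 => 0
  | t + 1 => gup f l ξ (rvec f l ξ ys us t) (ys (t + 1)) (ys t) (us t)

/-- The Bellman operator `B_u V(r, y) = sup_{v ∈ Y} V(g(r, v, y, u), v)`. -/
noncomputable def Bu {M : ℕ} (f : X → U → W → X) (l : X → U → W → ℝ)
    (ξ : Y → Fin M → X) (V : (Fin M → EReal) → Y → EReal) (u : U)
    (r : Fin M → EReal) (y : Y) : EReal :=
  ⨆ v : Y, V (gup f l ξ r v y u) v

/-- The Bellman operator `B V(r, y) = inf_{u ∈ U} B_u V(r, y)`. -/
noncomputable def Bop {M : ℕ} (f : X → U → W → X) (l : X → U → W → ℝ)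
    (ξ : Y → Fin M → X) (V : (Fin M → EReal) → Y → EReal)
    (r : Fin M → EReal) (y : Y) : EReal :=
  ⨅ u : U, Bu f l ξ V u r y

/-- The value iteration `V_0(r, y) = max_i r^i`, `V_{k+1} = B V_k`. -/
noncomputable def Vseq {M : ℕ} (f : X → U → W → X) (l : X → U → W → ℝ)
    (ξ : Y → Fin M → X) : ℕ → (Fin M → EReal) → Y → EReal
  | 0 => fun r _ => ⨆ i, r i
  | k + 1 => fun r y => Bop f l ξ (Vseq f l ξ k) r y

/-- The (possibly time-varying) information-state feedback policy
`μ_t(y_{0:t}, u_{0:t-1}) = η_t(r_t, y_t)`, where `r_0 = 0` and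
`r_{t+1} = g(r_t, y_{t+1}, y_t, u_t)`. -/
noncomputable def infoStrategyT {M : ℕ} [Nonempty Y] [Nonempty U]
    (f : X → U → W → X) (l : X → U → W → ℝ) (ξ : Y → Fin M → X)
    (η : ℕ → (Fin M → EReal) → Y → U) : ℕ → List Y → List U → U :=
  fun t ysl usl =>
    η t (rvec f l ξ (fun τ => ysl.getD τ (Classical.arbitrary Y))
          (fun τ => usl.getD τ (Classical.arbitrary U)) (ysl.length - 1))
      (ysl.getD (ysl.length - 1) (Classical.arbitrary Y))

/-- Stationary information-state feedback policy `μ_t(y_{0:t}, u_{0:t-1}) = η(r_t, y_t)`. -/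
noncomputable def infoStrategy {M : ℕ} [Nonempty Y] [Nonempty U]
    (f : X → U → W → X) (l : X → U → W → ℝ) (ξ : Y → Fin M → X)
    (η : (Fin M → EReal) → Y → U) : ℕ → List Y → List U → U :=
  infoStrategyT f l ξ (fun _ => η)

end

/-!
The information state is the worst-case history on the current preimage, `r_t^i = ρ_t(ξ^i(y_t))`,
so `max_i r_{N+1}^i` is the worst cost compatible with the measurement record. For any strategy,
unrolling `V_{k+1} ≤ B_{u_t} V_k` along the inputs it would choose bounds `V_{N+1}(0, y_0)` by the
worst cost over all records, which is `J_π^N(y_0)`. Conversely, for `c > V_{N+1}(0, y_0)` the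
information-state policy that picks at time `t` some `u` with `B_u V_{N-t}(r_t, y_t) < c` keeps
`V_{N+1-t}(r_t, y_t) < c` along every closed loop; at `t = N + 1` this bounds the cost by `c`.
-/

open Function

section

variable {X U W Y : Type*}

theorem EReal.sSup_add_coe (c : ℝ) (s : Set EReal) :
    sSup s + (c : EReal) = ⨆ x ∈ s, x + (c : EReal) :=
  OrderIso.map_sSup
    { toFun := (· + (c : EReal))
      invFun := (· - (c : EReal))
      left_inv := fun _ => EReal.add_sub_cancel_right
      right_inv := fun _ => EReal.sub_add_cancel
      map_rel_iff' := (EReal.addLECancellable_coe c).add_le_add_iff_right } s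

section ClosedLoop

variable (f : X → U → W → X) (h : X → Y) (π : ℕ → List Y → List U → U)

theorem loop_measurements (x0 : X) (ws : ℕ → W) (t : ℕ) :
    (loop f h π x0 ws t).2.1 = (List.range (t + 1)).map fun τ => h (cstate f h π x0 ws τ) := by
  induction t with
  | zero => rfl
  | succ t ih =>
    rw [List.range_succ, List.map_append, ← ih]
    rfl

theorem loop_inputs (x0 : X) (ws : ℕ → W) (t : ℕ) :
    (loop f h π x0 ws t).2.2 = List.ofFn fun i : Fin t => cinput f h π x0 ws i := by
  induction t with
  | zero => rfl
  | succ t ih =>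
    rw [List.ofFn_succ']
    simp only [Fin.val_castSucc, Fin.val_last, ← ih, List.concat_eq_append]
    rfl

theorem inputsOf_congr {ys ys' : ℕ → Y} {t : ℕ} (hys : ∀ τ ≤ t, ys τ = ys' τ) :
    inputsOf π ys t = inputsOf π ys' t := by
  induction t using Nat.strong_induction_on with
  | _ t ih =>
    rw [inputsOf, inputsOf]
    congr 1
    · exact List.map_congr_left fun τ hτ => hys τ (Nat.lt_succ_iff.mp (List.mem_range.mp hτ))
    · exact congrArg List.ofFn <| funext fun i =>
        ih i i.isLt fun σ hσ => hys σ (hσ.trans i.isLt.le)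

theorem cinput_eq_inputsOf (x0 : X) (ws : ℕ → W) (t : ℕ) :
    cinput f h π x0 ws t = inputsOf π (fun τ => h (cstate f h π x0 ws τ)) t := by
  induction t using Nat.strong_induction_on with
  | _ t ih =>
    rw [inputsOf, cinput, loop_measurements, loop_inputs]
    exact congrArg _ (congrArg List.ofFn (funext fun i => ih i i.isLt))

theorem cinput_eq_of_cstate_eq {x0 : X} {ws : ℕ → W} {xs : ℕ → X} {ys : ℕ → Y} {t : ℕ}
    (hxs : ∀ τ ≤ t, cstate f h π x0 ws τ = xs τ) (hys : ∀ τ ≤ t, h (xs τ) = ys τ) :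
    cinput f h π x0 ws t = inputsOf π ys t := by
  rw [cinput_eq_inputsOf]
  exact inputsOf_congr π fun τ hτ => by rw [hxs τ hτ, hys τ hτ]

theorem cstate_eq_of_inputsOf_trajectory {T : ℕ} {xs : ℕ → X} {ws : ℕ → W} {ys : ℕ → Y}
    (hrec : ∀ τ < T, xs (τ + 1) = f (xs τ) (inputsOf π ys τ) (ws τ))
    (hys : ∀ τ < T, h (xs τ) = ys τ) :
    ∀ τ ≤ T, cstate f h π (xs 0) ws τ = xs τ := by
  intro τ
  induction τ using Nat.strong_induction_on with
  | _ τ ih =>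
    intro hτ
    match τ with
    | 0 => rfl
    | τ + 1 =>
      show f (cstate f h π (xs 0) ws τ) (cinput f h π (xs 0) ws τ) (ws τ) = xs (τ + 1)
      rw [ih τ τ.lt_succ_self (by omega), hrec τ hτ,
        cinput_eq_of_cstate_eq f h π (fun σ hσ => ih σ (by omega) (by omega))
          (fun σ hσ => hys σ (by omega))]

end ClosedLoop

section InformationState

variable (f : X → U → W → X) (h : X → Y) (l : X → U → W → ℝ) {M : ℕ} {ξ : Y → Fin M → X}

theorem rvec_congr {ys ys' : ℕ → Y} {us us' : ℕ → U} {t : ℕ}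
    (hys : ∀ τ ≤ t, ys τ = ys' τ) (hus : ∀ τ < t, us τ = us' τ) :
    rvec f l ξ ys us t = rvec f l ξ ys' us' t := by
  induction t with
  | zero => rfl
  | succ t ih =>
    rw [rvec, rvec, ih (fun τ hτ => hys τ (by omega)) (fun τ hτ => hus τ (by omega)),
      hys (t + 1) le_rfl, hys t (by omega), hus t t.lt_succ_self]

theorem rho_zero [Nonempty W] (x : X) (ys : ℕ → Y) (us : ℕ → U) : rho f h l 0 x ys us = 0 := by
  refine le_antisymm (sSup_le ?_) (le_sSup ?_)
  · rintro _ ⟨-, -, -, -, -, rfl⟩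
    simp
  · exact ⟨fun _ => x, fun _ => Classical.arbitrary W, rfl, by simp, by simp, by simp⟩

theorem rho_succ_le_gup (hξ : ∀ y : Y, Set.range (ξ y) = {x : X | h x = y})
    (ys : ℕ → Y) (us : ℕ → U) (t : ℕ) (i : Fin M) :
    rho f h l (t + 1) (ξ (ys (t + 1)) i) ys us
      ≤ gup f l ξ (fun j => rho f h l t (ξ (ys t) j) ys us) (ys (t + 1)) (ys t) (us t) i := by
  refine sSup_le ?_
  rintro _ ⟨xs, ws, hxt, hrec, hys, rfl⟩
  obtain ⟨j, hj⟩ : xs t ∈ Set.range (ξ (ys t)) := (hξ _).ge (hys t t.lt_succ_self)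
  have hhist : ((∑ τ ∈ Finset.range t, l (xs τ) (us τ) (ws τ) : ℝ) : EReal)
      ≤ rho f h l t (ξ (ys t) j) ys us :=
    le_sSup ⟨xs, ws, hj.symm, fun τ hτ => hrec τ (by omega), fun τ hτ => hys τ (by omega), rfl⟩
  calc ((∑ τ ∈ Finset.range (t + 1), l (xs τ) (us τ) (ws τ) : ℝ) : EReal)
      = (l (ξ (ys t) j) (us t) (ws t) : EReal)
          + ((∑ τ ∈ Finset.range t, l (xs τ) (us τ) (ws τ) : ℝ) : EReal) := by
        rw [Finset.sum_range_succ, EReal.coe_add, hj, add_comm]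
    _ ≤ (l (ξ (ys t) j) (us t) (ws t) : EReal) + rho f h l t (ξ (ys t) j) ys us := by gcongr
    _ ≤ _ := by
        apply le_sSup
        exact ⟨j, ws t, by rw [← hxt, hrec t t.lt_succ_self, hj], rfl⟩

theorem gup_le_rho_succ (hξ : ∀ y : Y, Set.range (ξ y) = {x : X | h x = y})
    (ys : ℕ → Y) (us : ℕ → U) (t : ℕ) (i : Fin M) :
    gup f l ξ (fun j => rho f h l t (ξ (ys t) j) ys us) (ys (t + 1)) (ys t) (us t) i
      ≤ rho f h l (t + 1) (ξ (ys (t + 1)) i) ys us := by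
  refine sSup_le ?_
  rintro _ ⟨j, w, hstep, rfl⟩
  rw [add_comm]
  refine (EReal.sSup_add_coe _ _).trans_le (iSup₂_le ?_)
  rintro _ ⟨xs, ws, hxt, hrec, hys, rfl⟩
  -- extend the history reaching `ξ^j(y_t)` by the transition `w` to `ξ^i(y_{t+1})`
  refine le_sSup ⟨update xs (t + 1) (ξ (ys (t + 1)) i), update ws t w, update_self .., ?_, ?_, ?_⟩
  · intro τ hτ
    rcases Nat.lt_succ_iff_lt_or_eq.mp hτ with hτ | rfl
    · rw [update_of_ne (by omega), update_of_ne (by omega), update_of_ne (by omega)]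
      exact hrec τ hτ
    · rw [update_self, update_of_ne (by omega), update_self, hxt, hstep]
  · intro τ hτ
    rw [update_of_ne (by omega)]
    rcases Nat.lt_succ_iff_lt_or_eq.mp hτ with hτ | rfl
    · exact hys τ hτ
    · rw [hxt]
      exact (hξ _).le (Set.mem_range_self j)
  · have hprefix : ∀ τ ∈ Finset.range t,
        l (update xs (t + 1) (ξ (ys (t + 1)) i) τ) (us τ) (update ws t w τ)
          = l (xs τ) (us τ) (ws τ) := fun τ hτ => by
      have := Finset.mem_range.mp hτ
      rw [update_of_ne (by omega : τ ≠ t + 1), update_of_ne (by omega : τ ≠ t)]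
    rw [Finset.sum_range_succ, Finset.sum_congr rfl hprefix,
      update_of_ne (by omega : t ≠ t + 1), update_self, hxt, EReal.coe_add]

theorem rvec_eq_rho [Nonempty W] (hξ : ∀ y : Y, Set.range (ξ y) = {x : X | h x = y})
    (ys : ℕ → Y) (us : ℕ → U) (t : ℕ) :
    rvec f l ξ ys us t = fun i => rho f h l t (ξ (ys t) i) ys us := by
  induction t with
  | zero => exact funext fun _ => (rho_zero f h l _ ys us).symm
  | succ t ih =>
    funext i
    rw [rvec, ih]
    exact le_antisymm (gup_le_rho_succ f h l hξ ys us t i) (rho_succ_le_gup f h l hξ ys us t i)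

end InformationState

section LowerBound

variable (f : X → U → W → X) (h : X → Y) (l : X → U → W → ℝ) {M : ℕ} {ξ : Y → Fin M → X}

theorem Vseq_le_iSup_rvec (π : ℕ → List Y → List U → U) (k t : ℕ) (ys : ℕ → Y) :
    Vseq f l ξ k (rvec f l ξ ys (inputsOf π ys) t) (ys t)
      ≤ ⨆ (ys' : ℕ → Y) (_ : ∀ τ ≤ t, ys' τ = ys τ),
          ⨆ i, rvec f l ξ ys' (inputsOf π ys') (k + t) i := by
  induction k generalizing t ys with
  | zero =>
    rw [zero_add]
    exact le_iSup₂_of_le ys (fun _ _ => rfl) le_rfl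
  | succ k ih =>
    refine (iInf_le _ (inputsOf π ys t)).trans (iSup_le fun v => ?_)
    set ys₁ := update ys (t + 1) v with hys₁_def
    have hv : ys₁ (t + 1) = v := by rw [hys₁_def, update_self]
    have hys₁ : ∀ τ ≤ t, ys₁ τ = ys τ := fun τ hτ => update_of_ne (by omega) _ _
    have hus₁ : ∀ τ ≤ t, inputsOf π ys₁ τ = inputsOf π ys τ := fun τ hτ =>
      inputsOf_congr π fun σ hσ => hys₁ σ (hσ.trans hτ)
    have hr : gup f l ξ (rvec f l ξ ys (inputsOf π ys) t) v (ys t) (inputsOf π ys t)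
        = rvec f l ξ ys₁ (inputsOf π ys₁) (t + 1) := by
      rw [rvec, rvec_congr f l hys₁ fun τ hτ => hus₁ τ hτ.le, hv, hys₁ t le_rfl, hus₁ t le_rfl]
    calc Vseq f l ξ k (gup f l ξ (rvec f l ξ ys (inputsOf π ys) t) v (ys t) (inputsOf π ys t)) v
        = Vseq f l ξ k (rvec f l ξ ys₁ (inputsOf π ys₁) (t + 1)) (ys₁ (t + 1)) := by
          rw [hr, hv]
      _ ≤ _ := ih (t + 1) ys₁
      _ ≤ _ := by
          rw [Nat.add_right_comm, ← add_assoc]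
          exact iSup₂_le fun ys' hys' =>
            le_iSup₂_of_le ys' (fun τ hτ => (hys' τ (by omega)).trans (hys₁ τ hτ)) le_rfl

theorem rvec_le_Jcost [Nonempty W] (hξ : ∀ y : Y, Set.range (ξ y) = {x : X | h x = y})
    (π : ℕ → List Y → List U → U) (N : ℕ) (ys : ℕ → Y) (i : Fin M) :
    rvec f l ξ ys (inputsOf π ys) (N + 1) i ≤ Jcost f h l π N (ys 0) := by
  rw [rvec_eq_rho f h l hξ]
  refine sSup_le ?_
  rintro _ ⟨xs, ws, -, hrec, hys, rfl⟩
  refine le_sSup ⟨xs 0, ws, hys 0 N.succ_pos, ?_⟩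
  congr 1
  refine Finset.sum_congr rfl fun τ hτ => ?_
  have hτ : τ < N + 1 := Finset.mem_range.mp hτ
  have hxs := cstate_eq_of_inputsOf_trajectory f h π hrec hys
  rw [hxs τ hτ.le, cinput_eq_of_cstate_eq f h π (fun σ hσ => hxs σ (by omega))
    (fun σ hσ => hys σ (by omega))]

theorem Vseq_le_Jcost [Nonempty W] (hξ : ∀ y : Y, Set.range (ξ y) = {x : X | h x = y})
    (π : ℕ → List Y → List U → U) (N : ℕ) (y0 : Y) :
    Vseq f l ξ (N + 1) 0 y0 ≤ Jcost f h l π N y0 :=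
  (Vseq_le_iSup_rvec f l (ξ := ξ) π (N + 1) 0 fun _ => y0).trans <| iSup₂_le fun ys hys =>
    iSup_le fun i => hys 0 le_rfl ▸ rvec_le_Jcost f h l hξ π N ys i

end LowerBound

section UpperBound

variable (f : X → U → W → X) (h : X → Y) (l : X → U → W → ℝ) {M : ℕ} {ξ : Y → Fin M → X}

theorem cinput_infoStrategyT [Nonempty U] [Nonempty Y] (η : ℕ → (Fin M → EReal) → Y → U)
    (x0 : X) (ws : ℕ → W) (t : ℕ) :
    cinput f h (infoStrategyT f l ξ η) x0 ws t
      = η t (rvec f l ξ (fun τ => h (cstate f h (infoStrategyT f l ξ η) x0 ws τ))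
              (cinput f h (infoStrategyT f l ξ η) x0 ws) t)
          (h (cstate f h (infoStrategyT f l ξ η) x0 ws t)) := by
  rw [cinput, loop_measurements, loop_inputs]
  simp only [infoStrategyT, List.length_map, List.length_range, Nat.add_sub_cancel]
  congr 1
  · refine rvec_congr f l (fun τ hτ => ?_) fun τ hτ => ?_
    · rw [List.getD_eq_getElem _ _ (by simp; omega)]
      simp
    · rw [List.getD_eq_getElem _ _ (by simpa using hτ)]
      simp
  · rw [List.getD_eq_getElem _ _ (by simp)]
    simp

theorem cost_le_Vseq_zero [Nonempty W] (hξ : ∀ y : Y, Set.range (ξ y) = {x : X | h x = y})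
    (π : ℕ → List Y → List U → U) (x0 : X) (ws : ℕ → W) (T : ℕ) :
    ((∑ t ∈ Finset.range T, l (cstate f h π x0 ws t) (cinput f h π x0 ws t) (ws t) : ℝ) : EReal)
      ≤ Vseq f l ξ 0 (rvec f l ξ (fun τ => h (cstate f h π x0 ws τ)) (cinput f h π x0 ws) T)
          (h (cstate f h π x0 ws T)) := by
  obtain ⟨i, hi⟩ : cstate f h π x0 ws T ∈ Set.range (ξ (h (cstate f h π x0 ws T))) :=
    (hξ _).ge rfl
  refine le_trans ?_ (le_iSup _ i)
  rw [rvec_eq_rho f h l hξ]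
  exact le_sSup ⟨cstate f h π x0 ws, ws, hi.symm, fun _ _ => rfl, fun _ _ => rfl, rfl⟩

theorem Vseq_rvec_infoStrategyT_lt [Nonempty U] [Nonempty Y] {N : ℕ} {c : EReal}
    {η : ℕ → (Fin M → EReal) → Y → U}
    (hη : ∀ t r y, Bop f l ξ (Vseq f l ξ (N - t)) r y < c →
      Bu f l ξ (Vseq f l ξ (N - t)) (η t r y) r y < c)
    (x0 : X) (ws : ℕ → W) (h0 : Vseq f l ξ (N + 1) 0 (h x0) < c) :
    ∀ t ≤ N + 1, Vseq f l ξ (N + 1 - t)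
      (rvec f l ξ (fun τ => h (cstate f h (infoStrategyT f l ξ η) x0 ws τ))
        (cinput f h (infoStrategyT f l ξ η) x0 ws) t)
      (h (cstate f h (infoStrategyT f l ξ η) x0 ws t)) < c := by
  intro t
  induction t with
  | zero => exact fun _ => h0
  | succ t ih =>
    intro ht
    have hnow := ih (by omega)
    rw [show N + 1 - t = N - t + 1 by omega] at hnow
    rw [show N + 1 - (t + 1) = N - t by omega]
    refine (le_iSup (fun v => Vseq f l ξ (N - t) (gup f l ξ _ v _ _) v) _).trans_lt ?_
    rw [cinput_infoStrategyT]
    exact hη t _ _ hnow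

theorem Jcost_infoStrategyT_le [Nonempty W] [Nonempty U] [Nonempty Y]
    (hξ : ∀ y : Y, Set.range (ξ y) = {x : X | h x = y}) {N : ℕ} {c : EReal}
    {η : ℕ → (Fin M → EReal) → Y → U}
    (hη : ∀ t r y, Bop f l ξ (Vseq f l ξ (N - t)) r y < c →
      Bu f l ξ (Vseq f l ξ (N - t)) (η t r y) r y < c)
    {y0 : Y} (h0 : Vseq f l ξ (N + 1) 0 y0 < c) :
    Jcost f h l (infoStrategyT f l ξ η) N y0 ≤ c := by
  refine sSup_le ?_
  rintro _ ⟨x0, ws, rfl, rfl⟩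
  have hfinal := Vseq_rvec_infoStrategyT_lt f h l hη x0 ws h0 (N + 1) le_rfl
  rw [Nat.sub_self] at hfinal
  exact ((cost_le_Vseq_zero f h l hξ _ x0 ws (N + 1)).trans_lt hfinal).le

end UpperBound

end

theorem finite_horizon_value_eq_VI_general {X U W Y : Type*} [Nonempty U]
    [Nonempty W] [Nonempty Y] {M : ℕ} (f : X → U → W → X) (h : X → Y)
    (l : X → U → W → ℝ) (ξ : Y → Fin M → X)
    (hξ : ∀ y : Y, Set.range (ξ y) = {x : X | h x = y})
    (N : ℕ) (y0 : Y) :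
    (⨅ π : ℕ → List Y → List U → U, Jcost f h l π N y0)
      = Vseq f l ξ (N + 1) 0 y0 := by
  refine le_antisymm (le_of_forall_gt_imp_ge_of_dense fun c hc => ?_)
    (le_iInf fun π => Vseq_le_Jcost f h l hξ π N y0)
  have hselect : ∀ t r y, ∃ u, Bop f l ξ (Vseq f l ξ (N - t)) r y < c →
      Bu f l ξ (Vseq f l ξ (N - t)) u r y < c := fun t r y =>
    (em (Bop f l ξ (Vseq f l ξ (N - t)) r y < c)).elim
      (fun hlt => (iInf_lt_iff.mp hlt).imp fun _ hu _ => hu)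
      (fun hlt => ⟨Classical.arbitrary U, fun h' => absurd h' hlt⟩)
  choose η hη using hselect
  exact (iInf_le _ _).trans (Jcost_infoStrategyT_le f h l hξ hη hc)

/-- Under the positivity and finite-preimage assumptions, the optimal
finite-horizon worst-case value over all causal strategies equals the `(N+1)`-st
value-iteration function at the zero information state:
`inf_π J_π^N(y_0) = V_{N+1}(0, y_0)`. -/
theorem finite_horizon_value_eq_VI {X U W Y : Type*} [Nonempty X] [Nonempty U]
    [Nonempty W] [Nonempty Y] {M : ℕ} (f : X → U → W → X) (h : X → Y)
    (hsurj : Function.Surjective h) (l : X → U → W → ℝ) (ξ : Y → Fin M → X)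
    (pos : ∀ (x : X) (u : U), (0 : EReal) ≤ ⨆ w : W, (l x u w : EReal))
    (hξ : ∀ y : Y, Set.range (ξ y) = {x : X | h x = y})
    (N : ℕ) (y0 : Y) :
    (⨅ π : ℕ → List Y → List U → U, Jcost f h l π N y0)
      = Vseq f l ξ (N + 1) 0 y0 :=
  finite_horizon_value_eq_VI_general f h l ξ hξ N y0
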